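/- Let σ₀, σ > 0, n a nonnegative integer, and set σ̂² = 1/(σ₀⁻² + σ⁻²·n) (the posterior variance of a leaf with n observations). Then the precision increase from one new observation satisfies 1/(σ₀² + σ²/(n+1)) − 1/(σ₀² + σ²/n) ≥ (1/c)·(σ̂⁴/σ₀⁴)·σ⁻², where c = 1 + σ₀²/σ². -/

import Mathlib

/-!
Write `a = σ₀²` and `b = σ²`. The marginal precision `1 / (a + b / n)` of a leaf with `n`
observations equals `n / (a n + b)`, a formula that also gives the right value `0` at `n = 0`.
Its increment from `n` to `n + 1` is `b / ((a (n + 1) + b) (a n + b))`, while, since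
`σ̂² = a b / (a n + b)`, the claimed lower bound is `b² / ((a + b) (a n + b)²)`. Cross-multiplying,
the inequality reduces to `0 ≤ a² n`.
-/

noncomputable def marginalPrecision (a b n : ℝ) : ℝ := n / (a * n + b)

lemma one_div_add_div_eq_marginalPrecision (a b : ℝ) {n : ℝ} (hn : n ≠ 0) :
    1 / (a + b / n) = marginalPrecision a b n := by
  rw [marginalPrecision, add_div' _ _ _ hn, one_div_div]

lemma marginalPrecision_zero (a b : ℝ) : marginalPrecision a b 0 = 0 := by
  simp [marginalPrecision]

lemma marginalPrecision_succ_sub {a b n : ℝ} (hsucc : a * (n + 1) + b ≠ 0) (h : a * n + b ≠ 0) :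
    marginalPrecision a b (n + 1) - marginalPrecision a b n
      = b / ((a * (n + 1) + b) * (a * n + b)) := by
  rw [marginalPrecision, marginalPrecision, div_sub_div _ _ hsucc h]
  ring

noncomputable def posteriorVariance (a b n : ℝ) : ℝ := 1 / (a⁻¹ + b⁻¹ * n)

lemma posteriorVariance_eq {a b n : ℝ} (ha : a ≠ 0) (hb : b ≠ 0) :
    posteriorVariance a b n = a * b / (a * n + b) := by
  rw [posteriorVariance]
  field_simp
  ring

lemma precision_bound_eq {a b n : ℝ} (ha : 0 < a) (hb : 0 < b) (hn : 0 ≤ n) :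
    1 / (1 + a / b) * (posteriorVariance a b n ^ 2 / a ^ 2) * b⁻¹
      = b ^ 2 / ((a + b) * (a * n + b) ^ 2) := by
  have : 0 < a * n + b := by positivity
  rw [posteriorVariance_eq ha.ne' hb.ne']
  field_simp
  ring

lemma sq_div_le_div_of_nonneg {a b n : ℝ} (ha : 0 < a) (hb : 0 < b) (hn : 0 ≤ n) :
    b ^ 2 / ((a + b) * (a * n + b) ^ 2) ≤ b / ((a * (n + 1) + b) * (a * n + b)) := by
  have hcurr : 0 < a * n + b := by positivity
  rw [div_le_div_iff₀ (by positivity) (by positivity)]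
  have key : b * (a * (n + 1) + b) ≤ (a + b) * (a * n + b) := by nlinarith [mul_nonneg (sq_nonneg a) hn]
  calc b ^ 2 * ((a * (n + 1) + b) * (a * n + b))
      = (b * (a * (n + 1) + b)) * (b * (a * n + b)) := by ring
    _ ≤ ((a + b) * (a * n + b)) * (b * (a * n + b)) := by gcongr
    _ = b * ((a + b) * (a * n + b) ^ 2) := by ring

theorem leaf_node_precision_lower_bound (σ₀ σ : ℝ) (hσ₀ : 0 < σ₀) (hσ : 0 < σ) (n : ℕ) :
    (1 / (1 + σ₀ ^ 2 / σ ^ 2)) *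
        ((1 / ((σ₀ ^ 2)⁻¹ + (σ ^ 2)⁻¹ * n)) ^ 2 / σ₀ ^ 4) * (σ ^ 2)⁻¹
      ≤ 1 / (σ₀ ^ 2 + σ ^ 2 / (n + 1)) -
          (if n = 0 then 0 else 1 / (σ₀ ^ 2 + σ ^ 2 / n)) := by
  have ha : 0 < σ₀ ^ 2 := by positivity
  have hb : 0 < σ ^ 2 := by positivity
  have hn : (0 : ℝ) ≤ n := n.cast_nonneg
  have hprev : (if n = 0 then 0 else 1 / (σ₀ ^ 2 + σ ^ 2 / n))
      = marginalPrecision (σ₀ ^ 2) (σ ^ 2) n := by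
    split_ifs with h
    · simp [h, marginalPrecision_zero]
    · exact one_div_add_div_eq_marginalPrecision _ _ (Nat.cast_ne_zero.mpr h)
  rw [hprev, one_div_add_div_eq_marginalPrecision (σ₀ ^ 2) (σ ^ 2) (n.cast_add_one_ne_zero),
    marginalPrecision_succ_sub (by positivity) (by positivity),
    show σ₀ ^ 4 = (σ₀ ^ 2) ^ 2 by ring]
  exact (precision_bound_eq ha hb hn).trans_le (sq_div_le_div_of_nonneg ha hb hn)
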